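/- Suppose the sequence (x^k, λ^k) is generated by P-ALM, i.e., x^{k+1} ∈ X minimizes x ↦ θ(x) − ⟨λ^k, Ax − b⟩ + (r/2)‖A(x − x^k)‖² + (1/2)⟨x − x^k, Q(x − x^k)⟩ over X and λ^{k+1} = λ^k − r(A(2x^{k+1} − x^k) − b). Then for any integers T > 0 and κ ≥ 0, the ergodic averages x_T = (1/(T+1)) ∑_{k=κ}^{κ+T} x^{k+1} and w_T = (1/(T+1)) ∑_{k=κ}^{κ+T} w^{k+1} satisfy, for every w = (x, λ) ∈ M: θ(x_T) − θ(x) + ⟨w_T − w, J(w)⟩ ≤ ‖w^κ − w‖²_H / (2(T+1)). -/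

import Mathlib

open Matrix Finset

noncomputable section

/-- The bilinear form `(w₁, w₂) ↦ ⟨w₁, H w₂⟩` of the P-ALM matrix
`H = [[rAᵀA + Q, Aᵀ], [A, (1/r)I]]` on `ℝⁿ × ℝᵐ`. -/
def Hbil {n m : ℕ} (A : Matrix (Fin m) (Fin n) ℝ) (Q : Matrix (Fin n) (Fin n) ℝ) (r : ℝ)
    (w₁ w₂ : (Fin n → ℝ) × (Fin m → ℝ)) : ℝ :=
  w₁.1 ⬝ᵥ ((r • (Aᵀ * A) + Q) *ᵥ w₂.1) + w₁.1 ⬝ᵥ (Aᵀ *ᵥ w₂.2) + w₁.2 ⬝ᵥ (A *ᵥ w₂.1)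
    + 1 / r * (w₁.2 ⬝ᵥ w₂.2)

/-- The squared `H`-weighted norm `‖w‖²_H = ⟨w, Hw⟩`. -/
def HnormSq {n m : ℕ} (A : Matrix (Fin m) (Fin n) ℝ) (Q : Matrix (Fin n) (Fin n) ℝ) (r : ℝ)
    (w : (Fin n → ℝ) × (Fin m → ℝ)) : ℝ := Hbil A Q r w w

/-- The affine map `J(x, λ) = (−Aᵀλ, Ax − b)`. -/
def Jmap {n m : ℕ} (A : Matrix (Fin m) (Fin n) ℝ) (b : Fin m → ℝ)
    (w : (Fin n → ℝ) × (Fin m → ℝ)) : (Fin n → ℝ) × (Fin m → ℝ) :=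
  (-(Aᵀ *ᵥ w.2), A *ᵥ w.1 - b)

/-- The Euclidean inner product on `ℝⁿ × ℝᵐ`. -/
def pdot {n m : ℕ} (w₁ w₂ : (Fin n → ℝ) × (Fin m → ℝ)) : ℝ := w₁.1 ⬝ᵥ w₂.1 + w₁.2 ⬝ᵥ w₂.2

/-- `w* = (x*, λ*)` belongs to the solution set `M*` of `VI(θ, J, M)`, `M = X × ℝᵐ`:
`w*.1 ∈ X` and `θ(x) − θ(x*) + ⟨w − w*, J(w*)⟩ ≥ 0` for all `w ∈ M`. -/
def SolPoint {n m : ℕ} (θ : (Fin n → ℝ) → ℝ) (X : Set (Fin n → ℝ))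
    (A : Matrix (Fin m) (Fin n) ℝ) (b : Fin m → ℝ) (ws : (Fin n → ℝ) × (Fin m → ℝ)) : Prop :=
  ws.1 ∈ X ∧ ∀ w : (Fin n → ℝ) × (Fin m → ℝ), w.1 ∈ X →
    θ w.1 - θ ws.1 + pdot (w - ws) (Jmap A b ws) ≥ 0

/-- The P-ALM iteration: `x^{k+1} ∈ X` minimizes
`x ↦ θ(x) − ⟨λᵏ, Ax − b⟩ + (r/2)‖A(x − xᵏ)‖² + (1/2)⟨x − xᵏ, Q(x − xᵏ)⟩` over `X`, and
`λ^{k+1} = λᵏ − r(A(2x^{k+1} − xᵏ) − b)`. -/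
def PALM {n m : ℕ} (θ : (Fin n → ℝ) → ℝ) (X : Set (Fin n → ℝ))
    (A : Matrix (Fin m) (Fin n) ℝ) (b : Fin m → ℝ) (r : ℝ) (Q : Matrix (Fin n) (Fin n) ℝ)
    (x : ℕ → Fin n → ℝ) (lam : ℕ → Fin m → ℝ) : Prop :=
  (∀ k : ℕ, x (k + 1) ∈ X ∧ ∀ z ∈ X,
      θ (x (k + 1)) - lam k ⬝ᵥ (A *ᵥ x (k + 1) - b)
          + r / 2 * ((A *ᵥ (x (k + 1) - x k)) ⬝ᵥ (A *ᵥ (x (k + 1) - x k)))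
          + 1 / 2 * ((x (k + 1) - x k) ⬝ᵥ (Q *ᵥ (x (k + 1) - x k)))
        ≤ θ z - lam k ⬝ᵥ (A *ᵥ z - b)
          + r / 2 * ((A *ᵥ (z - x k)) ⬝ᵥ (A *ᵥ (z - x k)))
          + 1 / 2 * ((z - x k) ⬝ᵥ (Q *ᵥ (z - x k)))) ∧
  (∀ k : ℕ, lam (k + 1) = lam k - r • (A *ᵥ ((2 : ℝ) • x (k + 1) - x k) - b))

/-!
Each P-ALM step is a proximal point step for the monotone variational inequality
`VI(θ, J, M)` in the metric `H`. The first-order condition of the `x`-subproblem, combined with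
the multiplier update, gives `θ(x) - θ(x⁺) + ⟨w - w⁺, J(w⁺)⟩ ≥ ⟨w - w⁺, H(wᵏ - w⁺)⟩`. The linear
part of `J` is skew-symmetric, so `J(w⁺)` may be replaced by `J(w)`, and the three-point identity
for `H` bounds the right-hand side from below by `(‖w⁺ - w‖²_H - ‖wᵏ - w‖²_H) / 2`; `H ⪰ 0` because
`‖(x, λ)‖²_H = ⟨x, Qx⟩ + ‖r A x + λ‖² / r`. Summing from `κ` to `κ + T` telescopes, and Jensen's
inequality for the convex function `w' ↦ θ(x') - θ(x) + ⟨w' - w, J(w)⟩` passes to the averages.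
-/

open Filter Topology

theorem ConvexOn.nonneg_of_isMinOn_add {E : Type*} [AddCommGroup E] [Module ℝ E] {X : Set E}
    {θ φ : E → ℝ} (hθ : ConvexOn ℝ X θ) {x z : E} (hx : x ∈ X) (hz : z ∈ X)
    (hmin : IsMinOn (θ + φ) X x) {D C : ℝ}
    (hφ : ∀ t ∈ Set.Ioc (0 : ℝ) 1, φ (x + t • (z - x)) ≤ φ x + t * D + t ^ 2 * C) :
    0 ≤ θ z - θ x + D := by
  have hsmall : ∀ t ∈ Set.Ioc (0 : ℝ) 1, 0 ≤ θ z - θ x + D + t * C := by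
    rintro t ⟨ht0, ht1⟩
    have hseg : (1 - t) • x + t • z = x + t • (z - x) := by module
    have hmem : x + t • (z - x) ∈ X := hseg ▸ hθ.1 hx hz (by linarith) ht0.le (by ring)
    have hconv : θ (x + t • (z - x)) ≤ (1 - t) * θ x + t * θ z :=
      hseg ▸ hθ.2 hx hz (by linarith) ht0.le (by ring)
    have hle : θ x + φ x ≤ θ (x + t • (z - x)) + φ (x + t • (z - x)) := hmin hmem
    have hφt := hφ t ⟨ht0, ht1⟩
    refine nonneg_of_mul_nonneg_right ?_ ht0
    nlinarith
  have hlim : Tendsto (fun t => θ z - θ x + D + t * C) (𝓝[>] 0) (𝓝 (θ z - θ x + D)) := by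
    simpa using (((continuous_mul_const C).const_add (θ z - θ x + D)).tendsto 0).mono_left
      nhdsWithin_le_nhds
  exact ge_of_tendsto hlim (eventually_of_mem (Ioc_mem_nhdsGT one_pos) hsmall)

theorem ConvexOn.map_average_le_of_le_sub {E : Type*} [AddCommGroup E] [Module ℝ E] {s : Set E}
    {Φ : E → ℝ} (hΦ : ConvexOn ℝ s Φ) {u : ℕ → E} (hu : ∀ k, u (k + 1) ∈ s) {f : ℕ → ℝ}
    (hf : ∀ k, 0 ≤ f k) (hstep : ∀ k, Φ (u (k + 1)) ≤ f k - f (k + 1)) (T κ : ℕ) :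
    Φ (((T : ℝ) + 1)⁻¹ • ∑ k ∈ range (T + 1), u (κ + k + 1)) ≤ f κ / ((T : ℝ) + 1) := by
  set c : ℝ := ((T : ℝ) + 1)⁻¹
  have hc : 0 < c := by positivity
  have hweights : ∑ _k ∈ range (T + 1), c = 1 := by
    simp only [sum_const, card_range, nsmul_eq_mul, c]
    push_cast
    exact mul_inv_cancel₀ (by positivity)
  calc Φ (c • ∑ k ∈ range (T + 1), u (κ + k + 1))
      ≤ ∑ k ∈ range (T + 1), c • Φ (u (κ + k + 1)) := by
        rw [smul_sum]
        exact hΦ.map_sum_le (fun _ _ => hc.le) hweights fun _ _ => hu _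
    _ ≤ ∑ k ∈ range (T + 1), c * (f (κ + k) - f (κ + (k + 1))) :=
        sum_le_sum fun k _ => mul_le_mul_of_nonneg_left (hstep _) hc.le
    _ = c * (f κ - f (κ + (T + 1))) := by
        rw [← mul_sum, sum_range_sub' (fun i => f (κ + i))]
        rfl
    _ ≤ c * f κ := by
        gcongr
        linarith [hf (κ + (T + 1))]
    _ = f κ / ((T : ℝ) + 1) := by rw [div_eq_inv_mul]

section HForm

variable {n m : ℕ} (A : Matrix (Fin m) (Fin n) ℝ) (Q : Matrix (Fin n) (Fin n) ℝ) (r : ℝ)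

lemma Hbil_eq (w₁ w₂ : (Fin n → ℝ) × (Fin m → ℝ)) :
    Hbil A Q r w₁ w₂ = r * ((A *ᵥ w₁.1) ⬝ᵥ (A *ᵥ w₂.1)) + w₁.1 ⬝ᵥ (Q *ᵥ w₂.1)
      + w₂.2 ⬝ᵥ (A *ᵥ w₁.1) + w₁.2 ⬝ᵥ (A *ᵥ w₂.1) + 1 / r * (w₁.2 ⬝ᵥ w₂.2) := by
  rw [Hbil, add_mulVec, smul_mulVec, ← mulVec_mulVec, dotProduct_add, dotProduct_smul,
    dotProduct_transpose_mulVec, dotProduct_transpose_mulVec, dotProduct_comm (A *ᵥ w₂.1),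
    smul_eq_mul]

lemma Hbil_comm (hQ : Q.IsSymm) (w₁ w₂ : (Fin n → ℝ) × (Fin m → ℝ)) :
    Hbil A Q r w₁ w₂ = Hbil A Q r w₂ w₁ := by
  have hQsymm : w₁.1 ⬝ᵥ (Q *ᵥ w₂.1) = w₂.1 ⬝ᵥ (Q *ᵥ w₁.1) := by
    rw [← hQ.eq, dotProduct_transpose_mulVec, hQ.eq]
  rw [Hbil_eq, Hbil_eq, dotProduct_comm (A *ᵥ w₁.1), dotProduct_comm w₁.2 w₂.2, hQsymm]
  ring

lemma Hbil_sub_left (u v w : (Fin n → ℝ) × (Fin m → ℝ)) :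
    Hbil A Q r (u - v) w = Hbil A Q r u w - Hbil A Q r v w := by
  simp only [Hbil_eq, Prod.fst_sub, Prod.snd_sub, mulVec_sub, sub_dotProduct, dotProduct_sub]
  ring

lemma Hbil_sub_right (u v w : (Fin n → ℝ) × (Fin m → ℝ)) :
    Hbil A Q r u (v - w) = Hbil A Q r u v - Hbil A Q r u w := by
  simp only [Hbil_eq, Prod.fst_sub, Prod.snd_sub, mulVec_sub, sub_dotProduct, dotProduct_sub]
  ring

lemma two_mul_Hbil_sub_eq (hQ : Q.IsSymm) (u v : (Fin n → ℝ) × (Fin m → ℝ)) :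
    2 * Hbil A Q r v (u - v) = HnormSq A Q r u - HnormSq A Q r v - HnormSq A Q r (u - v) := by
  simp only [HnormSq, Hbil_sub_left, Hbil_sub_right, Hbil_comm A Q r hQ u v]
  ring

lemma HnormSq_eq (hr : r ≠ 0) (w : (Fin n → ℝ) × (Fin m → ℝ)) :
    HnormSq A Q r w = w.1 ⬝ᵥ (Q *ᵥ w.1)
      + 1 / r * ((r • (A *ᵥ w.1) + w.2) ⬝ᵥ (r • (A *ᵥ w.1) + w.2)) := by
  rw [HnormSq, Hbil_eq]
  simp only [add_dotProduct, dotProduct_add, smul_dotProduct, dotProduct_smul, smul_eq_mul,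
    dotProduct_comm (A *ᵥ w.1) w.2]
  field_simp
  ring

lemma HnormSq_nonneg (hr : 0 < r) (hQ : Q.PosSemidef) (w : (Fin n → ℝ) × (Fin m → ℝ)) :
    0 ≤ HnormSq A Q r w := by
  rw [HnormSq_eq A Q r hr.ne']
  have hQw := hQ.dotProduct_mulVec_nonneg w.1
  rw [star_trivial] at hQw
  have hsq := dotProduct_self_star_nonneg (r • (A *ᵥ w.1) + w.2)
  rw [star_trivial] at hsq
  positivity

lemma quadratic_add_smul (hQ : Q.IsSymm) (p d : Fin n → ℝ) (t : ℝ) :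
    r / 2 * ((A *ᵥ (p + t • d)) ⬝ᵥ (A *ᵥ (p + t • d)))
        + 1 / 2 * ((p + t • d) ⬝ᵥ (Q *ᵥ (p + t • d)))
      = r / 2 * ((A *ᵥ p) ⬝ᵥ (A *ᵥ p)) + 1 / 2 * (p ⬝ᵥ (Q *ᵥ p))
        + t * (r * ((A *ᵥ d) ⬝ᵥ (A *ᵥ p)) + d ⬝ᵥ (Q *ᵥ p))
        + t ^ 2 * (r / 2 * ((A *ᵥ d) ⬝ᵥ (A *ᵥ d)) + 1 / 2 * (d ⬝ᵥ (Q *ᵥ d))) := by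
  have hQsymm : p ⬝ᵥ (Q *ᵥ d) = d ⬝ᵥ (Q *ᵥ p) := by
    rw [← hQ.eq, dotProduct_transpose_mulVec, hQ.eq]
  simp only [mulVec_add, mulVec_smul, dotProduct_add, add_dotProduct, dotProduct_smul,
    smul_dotProduct, smul_eq_mul, hQsymm, dotProduct_comm (A *ᵥ p) (A *ᵥ d)]
  ring

end HForm

lemma pdot_sub_Jmap_eq {n m : ℕ} (A : Matrix (Fin m) (Fin n) ℝ) (b : Fin m → ℝ)
    (u v : (Fin n → ℝ) × (Fin m → ℝ)) :
    pdot (u - v) (Jmap A b u) = pdot (u - v) (Jmap A b v) := by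
  simp only [pdot, Jmap, Prod.fst_sub, Prod.snd_sub, mulVec_sub, dotProduct_neg,
    dotProduct_sub, sub_dotProduct, dotProduct_transpose_mulVec]
  ring

lemma convexOn_pdot_sub {n m : ℕ} (w J : (Fin n → ℝ) × (Fin m → ℝ)) :
    ConvexOn ℝ Set.univ fun v => pdot (v - w) J := by
  refine ⟨convex_univ, fun u _ v _ a c _ _ hac => le_of_eq ?_⟩
  simp only [pdot, Prod.fst_sub, Prod.snd_sub, Prod.fst_add, Prod.snd_add, Prod.smul_fst,
    Prod.smul_snd, sub_dotProduct, add_dotProduct, smul_dotProduct, smul_eq_mul]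
  linear_combination (w.1 ⬝ᵥ J.1 + w.2 ⬝ᵥ J.2) * hac

namespace PALM

variable {n m : ℕ} {θ : (Fin n → ℝ) → ℝ} {X : Set (Fin n → ℝ)} {A : Matrix (Fin m) (Fin n) ℝ}
  {b : Fin m → ℝ} {r : ℝ} {Q : Matrix (Fin n) (Fin n) ℝ} {x : ℕ → Fin n → ℝ}
  {lam : ℕ → Fin m → ℝ}

theorem optimality (halg : PALM θ X A b r Q x lam) (hθ : ConvexOn ℝ X θ) (hQ : Q.IsSymm)
    (k : ℕ) {z : Fin n → ℝ} (hz : z ∈ X) :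
    0 ≤ θ z - θ (x (k + 1)) + (r * ((A *ᵥ (z - x (k + 1))) ⬝ᵥ (A *ᵥ (x (k + 1) - x k)))
      + (z - x (k + 1)) ⬝ᵥ (Q *ᵥ (x (k + 1) - x k)) - lam k ⬝ᵥ (A *ᵥ (z - x (k + 1)))) := by
  obtain ⟨hxX, hmin⟩ := halg.1 k
  let φ : (Fin n → ℝ) → ℝ := fun y => -(lam k ⬝ᵥ (A *ᵥ y - b))
    + (r / 2 * ((A *ᵥ (y - x k)) ⬝ᵥ (A *ᵥ (y - x k))) + 1 / 2 * ((y - x k) ⬝ᵥ (Q *ᵥ (y - x k))))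
  refine hθ.nonneg_of_isMinOn_add (φ := φ) hxX hz (fun y hy => ?_)
    (C := r / 2 * ((A *ᵥ (z - x (k + 1))) ⬝ᵥ (A *ᵥ (z - x (k + 1))))
      + 1 / 2 * ((z - x (k + 1)) ⬝ᵥ (Q *ᵥ (z - x (k + 1))))) fun t _ => le_of_eq ?_
  · have := hmin y hy
    simp only [Set.mem_ofPred_eq, Pi.add_apply, φ]
    linarith
  · have hshift : x (k + 1) + t • (z - x (k + 1)) - x k
        = (x (k + 1) - x k) + t • (z - x (k + 1)) := by abel
    simp only [φ]
    rw [hshift, quadratic_add_smul A Q r hQ, mulVec_add, mulVec_smul, add_sub_right_comm,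
      dotProduct_add, dotProduct_smul, smul_eq_mul]
    ring

theorem variational_ineq (halg : PALM θ X A b r Q x lam) (hθ : ConvexOn ℝ X θ) (hQ : Q.IsSymm)
    (hr : r ≠ 0) (k : ℕ) {w : (Fin n → ℝ) × (Fin m → ℝ)} (hw : w.1 ∈ X) :
    θ (x (k + 1)) - θ w.1 + pdot ((x (k + 1), lam (k + 1)) - w) (Jmap A b (x (k + 1), lam (k + 1)))
      ≤ Hbil A Q r ((x (k + 1), lam (k + 1)) - w) ((x k, lam k) - (x (k + 1), lam (k + 1))) := by
  have hopt := halg.optimality hθ hQ k hw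
  have hres : A *ᵥ x (k + 1) - b = A *ᵥ (x k - x (k + 1)) + (1 / r) • (lam k - lam (k + 1)) := by
    rw [halg.2 k, sub_sub_cancel, smul_smul, one_div_mul_cancel hr, one_smul, mulVec_sub,
      mulVec_sub, mulVec_smul]
    module
  rw [Hbil_eq]
  simp only [pdot, Jmap, Prod.fst_sub, Prod.snd_sub]
  rw [hres]
  simp only [mulVec_sub, dotProduct_sub, sub_dotProduct, dotProduct_add, dotProduct_smul,
    dotProduct_neg, dotProduct_transpose_mulVec, smul_eq_mul] at hopt ⊢
  linear_combination hopt

theorem step_bound (halg : PALM θ X A b r Q x lam) (hθ : ConvexOn ℝ X θ) (hr : 0 < r)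
    (hQ : Q.PosSemidef) (k : ℕ) {w : (Fin n → ℝ) × (Fin m → ℝ)} (hw : w.1 ∈ X) :
    θ (x (k + 1)) - θ w.1 + pdot ((x (k + 1), lam (k + 1)) - w) (Jmap A b w)
      ≤ (HnormSq A Q r ((x k, lam k) - w) - HnormSq A Q r ((x (k + 1), lam (k + 1)) - w)) / 2 := by
  have hQs : Q.IsSymm := isHermitian_iff_isSymm.mp hQ.1
  have hvi := halg.variational_ineq hθ hQs hr.ne' k hw
  rw [pdot_sub_Jmap_eq] at hvi
  have hthree := two_mul_Hbil_sub_eq A Q r hQs ((x k, lam k) - w) ((x (k + 1), lam (k + 1)) - w)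
  rw [sub_sub_sub_cancel_right] at hthree
  have := HnormSq_nonneg A Q r hr hQ ((x k, lam k) - (x (k + 1), lam (k + 1)))
  linarith

end PALM

theorem stmt_11_general (n m : ℕ) (θ : (Fin n → ℝ) → ℝ) (hθ : ConvexOn ℝ Set.univ θ)
    (X : Set (Fin n → ℝ)) (hXconvex : Convex ℝ X)
    (A : Matrix (Fin m) (Fin n) ℝ) (b : Fin m → ℝ) (r : ℝ) (hr : 0 < r)
    (Q : Matrix (Fin n) (Fin n) ℝ) (hQ : Q.PosDef)
    (x : ℕ → Fin n → ℝ) (lam : ℕ → Fin m → ℝ) (halg : PALM θ X A b r Q x lam) :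
    ∀ T : ℕ, 0 < T → ∀ κ : ℕ,
      ∀ xT : Fin n → ℝ, xT = ((T : ℝ) + 1)⁻¹ • ∑ k ∈ Finset.range (T + 1), x (κ + k + 1) →
      ∀ lamT : Fin m → ℝ,
        lamT = ((T : ℝ) + 1)⁻¹ • ∑ k ∈ Finset.range (T + 1), lam (κ + k + 1) →
      ∀ w : (Fin n → ℝ) × (Fin m → ℝ), w.1 ∈ X →
        θ xT - θ w.1 + pdot ((xT, lamT) - w) (Jmap A b w) ≤
          HnormSq A Q r ((x κ, lam κ) - w) / (2 * ((T : ℝ) + 1)) := by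
  intro T _ κ xT hxT lamT hlamT w hw
  have hΦ : ConvexOn ℝ Set.univ fun v : (Fin n → ℝ) × (Fin m → ℝ) =>
      θ v.1 - θ w.1 + pdot (v - w) (Jmap A b w) := by
    refine (((hθ.comp_linearMap (LinearMap.fst ℝ _ _)).add
      (convexOn_pdot_sub w (Jmap A b w))).add_const (-θ w.1)).congr fun v _ => ?_
    simp only [Pi.add_apply, Function.comp_apply, LinearMap.fst_apply]
    ring
  have hbound := hΦ.map_average_le_of_le_sub (u := fun k => (x k, lam k))
    (f := fun k => HnormSq A Q r ((x k, lam k) - w) / 2) (fun _ => Set.mem_univ _)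
    (fun _ => div_nonneg (HnormSq_nonneg A Q r hr hQ.posSemidef _) two_pos.le)
    (fun k => (halg.step_bound (hθ.subset (Set.subset_univ X) hXconvex) hr hQ.posSemidef k
      hw).trans_eq (sub_div _ _ _)) T κ
  have havg : ((T : ℝ) + 1)⁻¹ • ∑ k ∈ Finset.range (T + 1), (x (κ + k + 1), lam (κ + k + 1))
      = (xT, lamT) := by
    refine Prod.ext ?_ ?_ <;> simp [hxT, hlamT, Prod.fst_sum, Prod.snd_sum]
  rw [← div_div]
  simpa only [havg] using hbound

/-- Theorem 2.5, ergodic `O(1/T)` rate. -/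
theorem stmt_11 (n m : ℕ) (θ : (Fin n → ℝ) → ℝ) (hθ : ConvexOn ℝ Set.univ θ)
    (X : Set (Fin n → ℝ)) (hXne : X.Nonempty) (hXclosed : IsClosed X) (hXconvex : Convex ℝ X)
    (A : Matrix (Fin m) (Fin n) ℝ) (b : Fin m → ℝ) (r : ℝ) (hr : 0 < r)
    (Q : Matrix (Fin n) (Fin n) ℝ) (hQ : Q.PosDef)
    (x : ℕ → Fin n → ℝ) (lam : ℕ → Fin m → ℝ) (halg : PALM θ X A b r Q x lam) :
    ∀ T : ℕ, 0 < T → ∀ κ : ℕ,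
      ∀ xT : Fin n → ℝ, xT = ((T : ℝ) + 1)⁻¹ • ∑ k ∈ Finset.range (T + 1), x (κ + k + 1) →
      ∀ lamT : Fin m → ℝ,
        lamT = ((T : ℝ) + 1)⁻¹ • ∑ k ∈ Finset.range (T + 1), lam (κ + k + 1) →
      ∀ w : (Fin n → ℝ) × (Fin m → ℝ), w.1 ∈ X →
        θ xT - θ w.1 + pdot ((xT, lamT) - w) (Jmap A b w) ≤
          HnormSq A Q r ((x κ, lam κ) - w) / (2 * ((T : ℝ) + 1)) :=
  stmt_11_general n m θ hθ X hXconvex A b r hr Q hQ x lam halg
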